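/- arXiv:0802.2681 — 3 statements merged into one kernel-verified Lean document; each statement's English description precedes it below -/
import Mathlib

section
/- For every integer n ≥ 1 and every rational number x, the sum over all partitions ρ of n of the quantity ((−x)^{ℓ(ρ)} / |Aut(ρ)|) · ∏_{i=1}^{ℓ(ρ)} ρ_i^{ρ_i − 1}/ρ_i! equals (−1)^n · x · (x − n)^{n−1} / n!. In particular, for integers m > a ≥ 1 and n = m − a, one has Σ_{ρ ⊢ n} (1/|Aut(ρ)|) ∏_i (ρ_i^{ρ_i−1}/ρ_i!) (−m)^{ℓ(ρ)} = −m·(−a)^{n−1}/n!, which is the partition-sum identity used in the paper's localization computation of the series A_k(u). -/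
open Finset Nat

/-! With `a k = y k^(k-1)/k!` (`y = -x`), the sum is the `n`-th coefficient of `exp (y T(t))`,
`T(t) = ∑ k^(k-1) t^k/k!` the tree function, and the claim is its classical Lagrange-inversion
value `y (y+n)^(n-1)/n!`. Instead of power series we use the recurrence
`n P_n = ∑ k a_k P_(n-k)`: weighting each partition by its number of parts equal to `k` and
removing one of them gives `a_k P_(n-k)`. The Abel polynomials satisfy the same recurrence by
the Abel identity `∑ C(n,k) k^k A_(n-k)(y) = (y+n)^n`, which after binomial expansion reduces to
the forward-difference evaluation `∑ (-1)^(N-k) C(N,k) k^N = N!`. -/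

section Abel

variable {R : Type*} [CommRing R]

theorem sum_range_neg_one_pow_mul_choose_mul_pow_self (N : ℕ) :
    ∑ k ∈ range (N + 1), (-1 : R) ^ (N - k) * N.choose k * (k : R) ^ N = N ! := by
  have h := congr_fun (fwdDiff_iter_eq_factorial (R := R) (n := N)) 0
  rw [fwdDiff_iter_eq_sum_shift] at h
  simpa [zsmul_eq_mul] using h

theorem Nat.choose_mul_choose_sub_comm (m k j : ℕ) :
    m.choose k * (m - k).choose j = m.choose j * (m - j).choose k := by
  have hk := Nat.choose_mul (n := m) (Nat.le_add_right k j)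
  have hj := Nat.choose_mul (n := m) (Nat.le_add_left j k)
  rw [Nat.add_sub_cancel_left] at hk
  rw [Nat.add_sub_cancel] at hj
  rw [← hk, ← hj, Nat.choose_symm_add]

theorem sum_choose_mul_pow_self_mul_sub_pow (m : ℕ) (v : R) :
    ∑ k ∈ range (m + 1), m.choose k * (k : R) ^ k * (v - k) ^ (m - k) =
      ∑ j ∈ range (m + 1), m.choose j * ((m - j)! : R) * v ^ j := by
  have expand : ∀ k ∈ range (m + 1), m.choose k * (k : R) ^ k * (v - k) ^ (m - k) =
      ∑ j ∈ range (m - k + 1),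
        m.choose k * (k : R) ^ k * (v ^ j * (-k) ^ (m - k - j) * (m - k).choose j) := by
    intro k _
    rw [sub_eq_add_neg, add_pow, mul_sum]
  rw [sum_congr rfl expand, sum_comm' (t' := range (m + 1)) (s' := fun j => range (m - j + 1))
    (by intro k j; simp only [mem_range]; omega)]
  refine sum_congr rfl fun j _ => ?_
  have term : ∀ k ∈ range (m - j + 1),
      m.choose k * (k : R) ^ k * (v ^ j * (-k) ^ (m - k - j) * (m - k).choose j) =
        m.choose j * v ^ j * ((-1) ^ (m - j - k) * (m - j).choose k * (k : R) ^ (m - j)) := by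
    intro k hk
    have hk : k ≤ m - j := Nat.lt_succ_iff.mp (mem_range.mp hk)
    have hchoose : (m.choose k : R) * (m - k).choose j = m.choose j * (m - j).choose k := by
      rw [← Nat.cast_mul, ← Nat.cast_mul, choose_mul_choose_sub_comm]
    have hpow : (k : R) ^ k * (-k) ^ (m - j - k) = (-1) ^ (m - j - k) * (k : R) ^ (m - j) := by
      rw [neg_pow, mul_left_comm, ← pow_add, Nat.add_sub_cancel' hk]
    rw [show m - k - j = m - j - k by omega]
    linear_combination (v ^ j * (-1) ^ (m - j - k) * (k : R) ^ (m - j)) * hchoose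
      + (m.choose k * (m - k).choose j * v ^ j : R) * hpow
  rw [sum_congr rfl term, ← mul_sum, sum_range_neg_one_pow_mul_choose_mul_pow_self]
  ring

theorem sum_choose_mul_factorial_mul_pow_succ (m : ℕ) (v : R) :
    ∑ j ∈ range (m + 1 + 1), (m + 1).choose j * ((m + 1 - j)! : R) * v ^ j =
      (m + 1) * ∑ j ∈ range (m + 1), m.choose j * ((m - j)! : R) * v ^ j + v ^ (m + 1) := by
  rw [sum_range_succ, mul_sum, choose_self, Nat.sub_self, factorial_zero]
  push_cast [one_mul]
  congr 1
  refine sum_congr rfl fun j hj => ?_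
  have hj : j ≤ m := Nat.lt_succ_iff.mp (mem_range.mp hj)
  have h : (m + 1).choose j * (m + 1 - j)! = (m + 1) * (m.choose j * (m - j)!) := by
    rw [Nat.sub_add_comm hj, factorial_succ, ← mul_assoc, ← Nat.sub_add_comm hj,
      ← choose_mul_succ_eq]
    ring
  rw [← mul_assoc]
  congr 1
  exact_mod_cast congrArg (Nat.cast : ℕ → R) h

def abelPoly : ℕ → R → R
  | 0, _ => 1
  | n + 1, y => y * (y + (n + 1)) ^ n

theorem abelPoly_eq_sub (n : ℕ) (y : R) :
    abelPoly n y = (y + n) ^ n - n * (y + n) ^ (n - 1) := by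
  cases n with
  | zero => simp [abelPoly]
  | succ n => push_cast [abelPoly, Nat.add_sub_cancel]; ring

/-- A special case of Abel's binomial identity. -/
theorem sum_choose_mul_pow_self_mul_abelPoly (n : ℕ) (y : R) :
    ∑ k ∈ range (n + 1), n.choose k * (k : R) ^ k * abelPoly (n - k) y = (y + n) ^ n := by
  cases n with
  | zero => simp [abelPoly]
  | succ m =>
    set v : R := y + (m + 1 : ℕ) with hv
    have hterm : ∀ k ∈ range (m + 1 + 1),
        (m + 1).choose k * (k : R) ^ k * abelPoly (m + 1 - k) y =
        (m + 1).choose k * (k : R) ^ k * (v - k) ^ (m + 1 - k) -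
          (m + 1) * (m.choose k * (k : R) ^ k * (v - k) ^ (m - k)) := by
      intro k hk
      have hk : k ≤ m + 1 := Nat.lt_succ_iff.mp (mem_range.mp hk)
      have hchoose : ((m + 1).choose k : R) * ((m + 1 - k : ℕ) : R) = (m + 1) * m.choose k := by
        rw [← Nat.cast_mul, ← choose_mul_succ_eq, Nat.cast_mul, mul_comm]
        push_cast
        ring
      have hyk : y + ((m + 1 - k : ℕ) : R) = v - k := by
        rw [hv, Nat.cast_sub hk]
        ring
      rw [abelPoly_eq_sub, show m + 1 - k - 1 = m - k by omega, hyk]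
      linear_combination (-((k : R) ^ k * (v - k) ^ (m - k))) * hchoose
    have hlast : ∑ k ∈ range (m + 1 + 1), (m.choose k : R) * (k : R) ^ k * (v - k) ^ (m - k) =
        ∑ k ∈ range (m + 1), (m.choose k : R) * (k : R) ^ k * (v - k) ^ (m - k) := by
      rw [sum_range_succ, choose_succ_self, cast_zero, zero_mul, zero_mul, add_zero]
    rw [sum_congr rfl hterm, sum_sub_distrib, ← mul_sum, hlast,
      sum_choose_mul_pow_self_mul_sub_pow, sum_choose_mul_pow_self_mul_sub_pow,
      sum_choose_mul_factorial_mul_pow_succ, hv]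
    ring

theorem abelPoly_succ_neg (n : ℕ) (x : R) :
    abelPoly (n + 1) (-x) = (-1) ^ (n + 1) * x * (x - (n + 1 : ℕ)) ^ n := by
  rw [abelPoly, show -x + (n + 1) = -(x - (n + 1 : ℕ)) by push_cast; ring, neg_pow]
  ring

theorem add_mul_abelPoly (n : ℕ) (y : R) : (y + n) * abelPoly n y = y * (y + n) ^ n := by
  cases n with
  | zero => simp [abelPoly]
  | succ n => push_cast [abelPoly]; ring

end Abel

namespace Multiset

variable {α : Type*} [DecidableEq α]

def symmetryFactor (s : Multiset α) : ℕ :=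
  ∏ a ∈ s.toFinset, (s.count a)!

theorem symmetryFactor_ne_zero (s : Multiset α) : s.symmetryFactor ≠ 0 :=
  prod_ne_zero_iff.mpr fun _ _ => factorial_ne_zero _

theorem symmetryFactor_cons (a : α) (s : Multiset α) :
    (a ::ₘ s).symmetryFactor = (s.count a + 1) * s.symmetryFactor := by
  have hs : s.symmetryFactor = ∏ b ∈ (a ::ₘ s).toFinset, (s.count b)! := by
    refine prod_subset (toFinset_subset.mpr (subset_cons s a)) fun b _ hb => ?_
    rw [count_eq_zero_of_notMem (by simpa using hb), factorial_zero]
  have ha : a ∈ (a ::ₘ s).toFinset := by simp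
  rw [hs, symmetryFactor, ← mul_prod_erase _ _ ha, ← mul_prod_erase _ _ ha, count_cons_self,
    factorial_succ, mul_assoc]
  congr 2
  exact prod_congr rfl fun b hb => by rw [count_cons_of_ne (ne_of_mem_erase hb)]

end Multiset

theorem Nat.Partition.sum_range_count_mul {n : ℕ} (ρ : n.Partition) :
    ∑ k ∈ range (n + 1), ρ.parts.count k * k = n := by
  have hsub : ρ.parts.toFinset ⊆ range (n + 1) := fun k hk =>
    mem_range.mpr (Nat.lt_succ_of_le (ρ.le_of_mem_parts (Multiset.mem_toFinset.mp hk)))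
  rw [← sum_subset hsub fun k _ hk => by
    rw [Multiset.count_eq_zero_of_notMem (by simpa using hk), zero_mul]]
  simpa using (sum_multiset_count ρ.parts).symm.trans ρ.parts_sum

section ExponentialFormula

variable {K : Type*} [Field K] [CharZero K]

/-- `∑_{ρ ⊢ n} ∏ᵢ a ρᵢ / |Aut ρ|`: the `n`-th coefficient of `exp (∑ₖ a k tᵏ)`. -/
noncomputable def partitionSum (a : ℕ → K) (n : ℕ) : K :=
  ∑ ρ : n.Partition, (ρ.parts.map a).prod / ρ.parts.symmetryFactor

theorem partitionSum_zero (a : ℕ → K) : partitionSum a 0 = 1 := by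
  simp [partitionSum, Multiset.symmetryFactor]

theorem sum_count_mul_div_symmetryFactor (a : ℕ → K) {n k : ℕ} (hk1 : 1 ≤ k)
    (hk : k ≤ n) :
    ∑ ρ : n.Partition, ρ.parts.count k * ((ρ.parts.map a).prod / ρ.parts.symmetryFactor) =
      a k * partitionSum a (n - k) := by
  have hzero : ∑ ρ : {ρ : n.Partition // k ∉ ρ.parts},
      ρ.1.parts.count k * ((ρ.1.parts.map a).prod / ρ.1.parts.symmetryFactor : K) = 0 :=
    sum_eq_zero fun ρ _ => by simp [Multiset.count_eq_zero_of_notMem ρ.2]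
  rw [← Fintype.sum_subtype_add_sum_subtype (fun ρ : n.Partition => k ∈ ρ.parts), hzero,
    add_zero, ← (Nat.Partition.partitionWithPartEquiv hk1 hk).symm.sum_comp, partitionSum,
    mul_sum]
  refine sum_congr rfl fun ρ _ => ?_
  simp only [Nat.Partition.partitionWithPartEquiv_symm_apply_parts, Multiset.count_cons_self,
    Multiset.symmetryFactor_cons, Multiset.map_cons, Multiset.prod_cons]
  have := Nat.cast_ne_zero (R := K).mpr ρ.parts.symmetryFactor_ne_zero
  field_simp
  push_cast
  ring

theorem cast_mul_partitionSum (a : ℕ → K) (n : ℕ) :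
    (n : K) * partitionSum a n =
      ∑ k ∈ range (n + 1), k * a k * partitionSum a (n - k) := by
  calc (n : K) * partitionSum a n
      = ∑ ρ : n.Partition, ∑ k ∈ range (n + 1),
          (k : K) * (ρ.parts.count k * ((ρ.parts.map a).prod / ρ.parts.symmetryFactor)) := by
        rw [partitionSum, mul_sum]
        refine sum_congr rfl fun ρ _ => ?_
        have hn := congrArg (Nat.cast : ℕ → K) ρ.sum_range_count_mul
        push_cast at hn
        rw [← hn, sum_mul]
        exact sum_congr rfl fun k _ => by ring
    _ = ∑ k ∈ range (n + 1), k * a k * partitionSum a (n - k) := by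
        rw [sum_comm]
        refine sum_congr rfl fun k hk => ?_
        rcases Nat.eq_zero_or_pos k with rfl | hk1
        · simp
        · rw [← mul_sum, mul_assoc, sum_count_mul_div_symmetryFactor a hk1
            (Nat.lt_succ_iff.mp (mem_range.mp hk))]

theorem partitionSum_eq_of_cast_mul_eq (a g : ℕ → K) (h0 : g 0 = 1)
    (hg : ∀ n : ℕ, (n : K) * g n = ∑ k ∈ range (n + 1), k * a k * g (n - k)) (n : ℕ) :
    partitionSum a n = g n := by
  induction n using Nat.strong_induction_on with
  | _ n ih =>
    rcases Nat.eq_zero_or_pos n with rfl | hn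
    · rw [partitionSum_zero, h0]
    · refine mul_left_cancel₀ (Nat.cast_ne_zero.mpr hn.ne') ?_
      rw [cast_mul_partitionSum, hg]
      refine sum_congr rfl fun k _ => ?_
      rcases Nat.eq_zero_or_pos k with rfl | hk
      · simp
      · rw [ih (n - k) (Nat.sub_lt hn hk)]

end ExponentialFormula

theorem partitionSum_mul_pow_pred_div_factorial {K : Type*} [Field K] [CharZero K] (y : K)
    (n : ℕ) : partitionSum (fun k => y * (k ^ (k - 1) / k !)) n = abelPoly n y / n ! := by
  refine partitionSum_eq_of_cast_mul_eq _ (fun m => abelPoly m y / m !) (by simp [abelPoly])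
    (fun m => ?_) n
  have hn : (m ! : K) ≠ 0 := Nat.cast_ne_zero.mpr m.factorial_ne_zero
  have hterm : ∀ k ∈ range m,
      ((k + 1 : ℕ) : K) * (y * (((k + 1 : ℕ) : K) ^ (k + 1 - 1) / (k + 1)!)) *
          (abelPoly (m - (k + 1)) y / (m - (k + 1))!) =
        y / m ! * (m.choose (k + 1) * ((k + 1 : ℕ) : K) ^ (k + 1) * abelPoly (m - (k + 1)) y) := by
    intro k hk
    have hfac : (m.choose (k + 1) : K) * (k + 1)! * (m - (k + 1))! = m ! := by
      exact_mod_cast choose_mul_factorial_mul_factorial (mem_range.mp hk)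
    have h1 : ((k + 1)! : K) ≠ 0 := Nat.cast_ne_zero.mpr (factorial_ne_zero _)
    have h2 : ((m - (k + 1))! : K) ≠ 0 := Nat.cast_ne_zero.mpr (factorial_ne_zero _)
    rw [Nat.add_sub_cancel]
    field_simp
    linear_combination (-(y * ((k + 1 : ℕ) : K) ^ (k + 1) * abelPoly (m - (k + 1)) y)) * hfac
  have habel := sum_choose_mul_pow_self_mul_abelPoly m y
  rw [sum_range_succ'] at habel ⊢
  rw [sum_congr rfl hterm, ← mul_sum]
  simp only [cast_zero, zero_mul, add_zero, choose_zero_right, cast_one, pow_zero, one_mul,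
    Nat.sub_zero] at habel ⊢
  rw [eq_sub_of_add_eq habel]
  field_simp
  linear_combination add_mul_abelPoly m y

/-- The partition-sum identity
`Σ_{ρ ⊢ n} ((−x)^{ℓ(ρ)}/|Aut(ρ)|) ∏_i ρ_i^{ρ_i−1}/ρ_i! = (−1)^n x (x−n)^{n−1}/n!`,
together with its specialization `x = m`, `n = m − a`, used in the paper's
localization computation of the series `A_k(u)`. -/
theorem partition_sum_identity (n : ℕ) (hn : 1 ≤ n) :
    (∀ x : ℚ,
      ∑ ρ : Nat.Partition n,
        (-x) ^ ρ.parts.card / (∏ j ∈ ρ.parts.toFinset, (Nat.factorial (ρ.parts.count j) : ℚ)) *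
          (ρ.parts.map fun (p : ℕ) => (p : ℚ) ^ (p - 1) / (Nat.factorial p : ℚ)).prod
        = (-1 : ℚ) ^ n * x * (x - (n : ℚ)) ^ (n - 1) / (Nat.factorial n : ℚ)) ∧
    (∀ m a : ℕ, 1 ≤ a → a < m → n = m - a →
      ∑ ρ : Nat.Partition n,
        (1 / (∏ j ∈ ρ.parts.toFinset, (Nat.factorial (ρ.parts.count j) : ℚ))) *
          (ρ.parts.map fun (p : ℕ) => (p : ℚ) ^ (p - 1) / (Nat.factorial p : ℚ)).prod *
          (-(m : ℚ)) ^ ρ.parts.card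
        = -(m : ℚ) * (-(a : ℚ)) ^ (n - 1) / (Nat.factorial n : ℚ)) := by
  obtain ⟨k, rfl⟩ : ∃ k, n = k + 1 := ⟨n - 1, by omega⟩
  have hterm (y : ℚ) (ρ : (k + 1).Partition) :
      (ρ.parts.map fun p : ℕ => y * ((p : ℚ) ^ (p - 1) / p !)).prod / ρ.parts.symmetryFactor =
        y ^ ρ.parts.card / (∏ j ∈ ρ.parts.toFinset, ((ρ.parts.count j)! : ℚ)) *
          (ρ.parts.map fun p : ℕ => (p : ℚ) ^ (p - 1) / p !).prod := by
    rw [Multiset.prod_map_mul, Multiset.map_const', Multiset.prod_replicate,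
      Multiset.symmetryFactor, Nat.cast_prod]
    ring
  refine ⟨fun x => ?_, fun m a _ ham hnma => ?_⟩
  · calc _ = partitionSum (fun p : ℕ => -x * ((p : ℚ) ^ (p - 1) / p !)) (k + 1) :=
          sum_congr rfl fun ρ _ => (hterm (-x) ρ).symm
      _ = _ := by
          rw [partitionSum_mul_pow_pred_div_factorial, abelPoly_succ_neg, Nat.add_sub_cancel]
  · have hma : (m : ℚ) - (k + 1 : ℕ) = a := by rw [hnma, Nat.cast_sub ham.le]; ring
    calc _ = partitionSum (fun p : ℕ => -(m : ℚ) * ((p : ℚ) ^ (p - 1) / p !)) (k + 1) :=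
          sum_congr rfl fun ρ _ => by rw [hterm]; ring
      _ = _ := by
          rw [partitionSum_mul_pow_pred_div_factorial, abelPoly_succ_neg, hma, Nat.add_sub_cancel,
            neg_pow (a : ℚ)]
          ring
end

section
/- Let b_1, b_2, b_3, … be any sequence of rational numbers (more generally, elements of a commutative ℚ-algebra), and for each integer k ≥ 1 define c_k = Σ_{j=1}^{k} (j!/k^j)·C(k−1, k−j)·b_j. Then for every integer m ≥ 1 one has Σ_{a=1}^{m} (−1)^{m−a}·C(m,a)·a^m·c_a = m!·b_m. (This is the inversion step by which the paper solves the localization recursion S(mu)·S(u)^{m−2} = (1/m!)·Σ_a (−1)^{m−a}·C(m,a)·a^m·A_a(u) for the Hodge-integral series A_a(u).) -/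
/-!
Writing `K a j = j! / a^j · C(a-1, a-j)` and swapping the two summations, the claim reduces to
`Σ_{a=j}^m (-1)^(m-a) C(m,a) a^m K a j = m! · [j = m]`. For `j < m` the summand `a^m K a j` equals
`j · a^(m-j-1) · a(a-1)⋯(a-j+1)`, a polynomial in `a` of degree `m - 1` that vanishes at
`a = 0, …, j-1`; so the sum is the `m`-th forward difference at `0` of a polynomial of
degree `< m`, which is zero. For `j = m` only `a = m` contributes.
-/

open Finset Polynomial Nat

theorem Polynomial.sum_range_alternating_choose_mul_eval_eq_zero {R : Type*} [CommRing R]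
    (P : R[X]) {n : ℕ} (hP : P.natDegree < n) :
    ∑ k ∈ range (n + 1), (-1 : R) ^ (n - k) * n.choose k * P.eval (k : R) = 0 := by
  have h := congr_fun (P.fwdDiff_iter_eq_zero_of_degree_lt hP) 0
  rw [fwdDiff_iter_eq_sum_shift] at h
  simpa [zsmul_eq_mul] using h

theorem Nat.factorial_mul_choose_pred_mul_self {j a : ℕ} (hj : 1 ≤ j) (hja : j ≤ a) :
    j ! * (a - 1).choose (a - j) * a = j * a.descFactorial j := by
  obtain ⟨j, rfl⟩ := Nat.exists_eq_add_of_le' hj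
  obtain ⟨a, rfl⟩ := Nat.exists_eq_add_of_le' (hj.trans hja)
  rw [show a + 1 - (j + 1) = a - j by omega, add_tsub_cancel_right,
    choose_symm (by omega), succ_descFactorial_succ, descFactorial_eq_factorial_mul_choose,
    factorial_succ]
  ring

def inversionKernel (k j : ℕ) : ℚ :=
  (j ! : ℚ) / (k : ℚ) ^ j * ((k - 1).choose (k - j) : ℚ)

theorem pow_mul_inversionKernel {m j a : ℕ} (hj : 1 ≤ j) (hja : j ≤ a) (hjm : j < m) :
    (a : ℚ) ^ m * inversionKernel a j
      = (C (j : ℚ) * X ^ (m - j - 1) * descPochhammer ℚ j).eval (a : ℚ) := by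
  have ha : (a : ℚ) ≠ 0 := by norm_cast; omega
  have hpow : (a : ℚ) ^ m = a ^ (m - j - 1) * a ^ j * a := by
    rw [← pow_add, ← pow_succ]; congr 1; omega
  have key : (j ! : ℚ) * (a - 1).choose (a - j) * a = j * a.descFactorial j := by
    exact_mod_cast Nat.factorial_mul_choose_pred_mul_self hj hja
  simp only [inversionKernel, eval_mul, eval_C, eval_pow, eval_X,
    descPochhammer_eval_eq_descFactorial]
  rw [hpow, mul_right_comm (j : ℚ), ← key]
  field_simp

theorem sum_alternating_mul_inversionKernel_of_lt {m j : ℕ} (hj : 1 ≤ j) (hjm : j < m) :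
    ∑ a ∈ Icc j m, (-1 : ℚ) ^ (m - a) * m.choose a * (a : ℚ) ^ m * inversionKernel a j
      = 0 := by
  set P : ℚ[X] := C (j : ℚ) * X ^ (m - j - 1) * descPochhammer ℚ j
  have hP : P.natDegree < m := by
    calc P.natDegree ≤ m - j - 1 + j := by
          refine natDegree_mul_le.trans (_root_.add_le_add ?_ (descPochhammer_natDegree ℚ j).le)
          exact natDegree_C_mul_le _ _ |>.trans (natDegree_X_pow_le _)
      _ < m := by omega
  rw [← P.sum_range_alternating_choose_mul_eval_eq_zero hP]
  refine sum_subset_zero_on_sdiff (fun a ha => ?_) (fun a ha => ?_) (fun a ha => ?_)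
  · simp only [mem_Icc, mem_range] at ha ⊢; omega
  · simp only [mem_sdiff, mem_Icc, mem_range] at ha
    simp [P, descPochhammer_eval_eq_descFactorial,
      descFactorial_eq_zero_iff_lt.mpr (by omega : a < j)]
  · rw [mul_assoc, pow_mul_inversionKernel hj (mem_Icc.mp ha).1 hjm]

theorem sum_alternating_mul_inversionKernel {m j : ℕ} (hj : 1 ≤ j) (hjm : j ≤ m) :
    ∑ a ∈ Icc j m, (-1 : ℚ) ^ (m - a) * m.choose a * (a : ℚ) ^ m * inversionKernel a j
      = if j = m then (m ! : ℚ) else 0 := by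
  rcases hjm.lt_or_eq with hlt | rfl
  · rw [if_neg hlt.ne, sum_alternating_mul_inversionKernel_of_lt hj hlt]
  · have hj0 : (j : ℚ) ≠ 0 := by norm_cast; omega
    simp only [Icc_self, inversionKernel, sum_singleton, tsub_self, pow_zero, choose_self, cast_one,
      mul_one, one_mul, choose_zero_right, ↓reduceIte]
    field_simp

/-- The inversion step solving the localization recursion for the series `A_a(u)`:
if `c_k = Σ_{j=1}^k (j!/k^j)·C(k−1,k−j)·b_j`, then
`Σ_{a=1}^m (−1)^{m−a}·C(m,a)·a^m·c_a = m!·b_m`. -/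
theorem triangular_inversion {A : Type*} [CommRing A] [Algebra ℚ A] (b c : ℕ → A)
    (hc : ∀ k : ℕ, 1 ≤ k → c k = ∑ j ∈ Finset.Icc 1 k,
      (((Nat.factorial j : ℚ) / (k : ℚ) ^ j) * ((k - 1).choose (k - j) : ℚ)) • b j) :
    ∀ m : ℕ, 1 ≤ m →
      ∑ a ∈ Finset.Icc 1 m, ((-1 : ℚ) ^ (m - a) * (m.choose a : ℚ) * (a : ℚ) ^ m) • c a
        = (Nat.factorial m : ℚ) • b m := by
  intro m hm
  set w : ℕ → ℚ := fun a => (-1 : ℚ) ^ (m - a) * (m.choose a : ℚ) * (a : ℚ) ^ m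
  calc ∑ a ∈ Icc 1 m, w a • c a
      = ∑ a ∈ Icc 1 m, ∑ j ∈ Icc 1 a, (w a * inversionKernel a j) • b j := by
        refine sum_congr rfl fun a ha => ?_
        rw [hc a (mem_Icc.mp ha).1, smul_sum]
        simp only [smul_smul, inversionKernel]
    _ = ∑ j ∈ Icc 1 m, (∑ a ∈ Icc j m, w a * inversionKernel a j) • b j := by
        rw [sum_comm' (t' := Icc 1 m) (s' := fun j => Icc j m)
          (fun a j => by simp only [mem_Icc]; omega)]
        simp only [sum_smul]
    _ = ∑ j ∈ Icc 1 m, (if j = m then (m ! : ℚ) else 0) • b j :=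
        sum_congr rfl fun j hj =>
          by rw [sum_alternating_mul_inversionKernel (mem_Icc.mp hj).1 (mem_Icc.mp hj).2]
    _ = (m ! : ℚ) • b m := by simp [ite_smul, hm]
end

section
/- Let u be a real number with 0 < u < 2π and set S(u) = sin(u/2)/(u/2) (which is nonzero). Let z be a complex number which is not equal to 0, −1, −2, − 3, …, and define G(w,z) = Σ_{m≥1} w^m/(z(z+1)⋯(z+m)) for complex w; this series converges absolutely. Then Σ_{m≥1} m·z^{m−1}·S(mu) / ( S(u)^m · (z+1)(z+2)⋯(z+m) ) = (1/(iu)) · [ G( izu/(1−e^{−iu}), z ) − G( −izu/(1−e^{iu}), z ) ], where i is the imaginary unit, the left-hand series converges absolutely, and S(mu) = sin(mu/2)/(mu/2). -/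
open Complex

/-- The hypergeometric-type series `G(w,z) = Σ_{m≥1} w^m / (z(z+1)⋯(z+m))`. -/
noncomputable def Gser (z w : ℂ) : ℂ :=
  ∑' m : ℕ, w ^ (m + 1) / ∏ k ∈ Finset.range (m + 2), (z + (k : ℂ))

/-!
With `ρ = z u / (2 sin (u/2))` the two arguments of `G` are `ρ e^{iu/2}` and `ρ e^{-iu/2}`, so the
difference of their `(m+1)`-st powers is `ρ^(m+1) · 2i sin ((m+1)u/2)`. Splitting the factor `z` off
`z(z+1)⋯(z+m+1)`, the two series then agree term by term, and `G(w, z)` converges for every `w` by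
the ratio test, the ratio of consecutive terms being `w / (z + m + 2) → 0`.
-/

open Finset Filter Topology

lemma prod_range_add_eq_mul_prod_Icc (z : ℂ) (m : ℕ) :
    ∏ k ∈ range (m + 2), (z + k) = z * ∏ k ∈ Icc 1 (m + 1), (z + k) := by
  rw [prod_range_eq_mul_Ico _ (by omega), show m + 2 = m + 1 + 1 from rfl, Ico_add_one_right_eq_Icc,
    Nat.cast_zero, add_zero]

lemma summable_norm_pow_succ_div_prod_range (z w : ℂ) :
    Summable fun m : ℕ => ‖w ^ (m + 1) / ∏ k ∈ range (m + 2), (z + k)‖ := by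
  have hratio : Tendsto (fun m : ℕ => ‖w‖ / ‖z + ((m + 2 : ℕ) : ℂ)‖) atTop (𝓝 0) :=
    tendsto_const_nhds.div_atTop
      (tendsto_norm_cobounded_atTop.comp <| (tendsto_const_add_cobounded z).comp <|
        tendsto_natCast_atTop_cobounded.comp (tendsto_add_atTop_nat 2))
  refine summable_norm_iff.mpr (summable_of_ratio_norm_eventually_le (r := 1 / 2) (by norm_num) ?_)
  filter_upwards [hratio.eventually (ge_mem_nhds one_half_pos)] with m hm
  rw [prod_range_succ, pow_succ, mul_div_mul_comm, norm_mul, mul_comm, norm_div]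
  exact mul_le_mul_of_nonneg_right hm (norm_nonneg _)

lemma hasSum_Gser (z w : ℂ) :
    HasSum (fun m : ℕ => w ^ (m + 1) / ∏ k ∈ range (m + 2), (z + k)) (Gser z w) :=
  (summable_norm_iff.mp (summable_norm_pow_succ_div_prod_range z w)).hasSum

lemma exp_mul_I_sub_exp_neg_mul_I (x : ℂ) : exp (x * I) - exp (-x * I) = 2 * I * sin x := by
  linear_combination (-I) * two_sin x + (exp (x * I) - exp (-x * I)) * I_sq

lemma one_sub_exp_neg_mul_I (u : ℂ) :
    1 - exp (-I * u) = exp (-(u / 2) * I) * (2 * I * sin (u / 2)) := by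
  rw [← exp_mul_I_sub_exp_neg_mul_I, mul_sub, ← exp_add, ← exp_add]
  ring_nf
  rw [exp_zero]
  ring

lemma one_sub_exp_mul_I (u : ℂ) :
    1 - exp (I * u) = -(exp (u / 2 * I) * (2 * I * sin (u / 2))) := by
  rw [← exp_mul_I_sub_exp_neg_mul_I, mul_sub, ← exp_add, ← exp_add]
  ring_nf
  rw [exp_zero]
  ring

lemma I_mul_mul_div_one_sub_exp_neg_mul_I (z u : ℂ) (hs : sin (u / 2) ≠ 0) :
    I * z * u / (1 - exp (-I * u)) = z * u / (2 * sin (u / 2)) * exp (u / 2 * I) := by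
  rw [one_sub_exp_neg_mul_I, neg_mul (u / 2), exp_neg]
  field_simp

lemma neg_I_mul_mul_div_one_sub_exp_mul_I (z u : ℂ) (hs : sin (u / 2) ≠ 0) :
    -I * z * u / (1 - exp (I * u)) = z * u / (2 * sin (u / 2)) * exp (-(u / 2) * I) := by
  rw [one_sub_exp_mul_I, neg_mul (u / 2), exp_neg]
  field_simp

lemma mul_exp_pow_sub_mul_exp_neg_pow (ρ θ : ℂ) (n : ℕ) :
    (ρ * exp (θ * I)) ^ n - (ρ * exp (-θ * I)) ^ n = ρ ^ n * (2 * I * sin (n * θ)) := by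
  rw [mul_pow, mul_pow, ← exp_nat_mul, ← exp_nat_mul, ← mul_sub, ← exp_mul_I_sub_exp_neg_mul_I]
  ring_nf

/-- `k z^(k-1) S(ku) / (S(u)^k (z+1)⋯(z+k))` with `k = m + 1` and `S(v) = sin(v/2)/(v/2)`. -/
noncomputable def hodgeTerm (u : ℝ) (z : ℂ) (m : ℕ) : ℂ :=
  ((m + 1 : ℕ) : ℂ) * z ^ m *
      ((Real.sin (((m + 1 : ℕ) : ℝ) * u / 2) / (((m + 1 : ℕ) : ℝ) * u / 2) : ℝ) : ℂ) /
    (((Real.sin (u / 2) / (u / 2) : ℝ) : ℂ) ^ (m + 1) * ∏ k ∈ Icc 1 (m + 1), (z + (k : ℂ)))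

lemma hodgeTerm_eq {u : ℝ} (hu : u ≠ 0) (hs : Real.sin (u / 2) ≠ 0) {z : ℂ} (hz : z ≠ 0)
    (m : ℕ) :
    hodgeTerm u z m = 1 / (I * u) *
      ((z * u / (2 * sin (u / 2)) * exp (u / 2 * I)) ^ (m + 1) / ∏ k ∈ range (m + 2), (z + k) -
        (z * u / (2 * sin (u / 2)) * exp (-(u / 2) * I)) ^ (m + 1) /
          ∏ k ∈ range (m + 2), (z + k)) := by
  have hs' : sin ((u : ℂ) / 2) ≠ 0 := by exact_mod_cast hs
  have hu' : (u : ℂ) ≠ 0 := by exact_mod_cast hu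
  rw [hodgeTerm, ← sub_div, mul_exp_pow_sub_mul_exp_neg_pow, prod_range_add_eq_mul_prod_Icc]
  push_cast [div_pow, mul_pow]
  field_simp
  ring

lemma hasSum_hodgeTerm {u : ℝ} (hu : u ≠ 0) (hs : Real.sin (u / 2) ≠ 0) {z : ℂ} (hz : z ≠ 0) :
    HasSum (hodgeTerm u z) (1 / (I * u) *
      (Gser z (I * z * u / (1 - exp (-I * u))) - Gser z (-I * z * u / (1 - exp (I * u))))) := by
  have hs' : sin ((u : ℂ) / 2) ≠ 0 := by exact_mod_cast hs
  rw [I_mul_mul_div_one_sub_exp_neg_mul_I _ _ hs', neg_I_mul_mul_div_one_sub_exp_mul_I _ _ hs',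
    funext (hodgeTerm_eq hu hs hz)]
  exact ((hasSum_Gser z _).sub (hasSum_Gser z _)).mul_left _

/-- For `0 < u < 2π` and `z` not a nonpositive integer,
`Σ_{m≥1} m z^{m−1} S(mu)/(S(u)^m (z+1)⋯(z+m))
  = (1/(iu))·[G(izu/(1−e^{−iu}),z) − G(−izu/(1−e^{iu}),z)]`,
with all series involved converging absolutely, where `S(v) = sin(v/2)/(v/2)`. -/
theorem hodge_series_analytic (u : ℝ) (hu : 0 < u) (hu' : u < 2 * Real.pi)
    (z : ℂ) (hz : ∀ k : ℕ, z ≠ -(k : ℂ)) :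
    (∀ w : ℂ, Summable fun m : ℕ =>
      ‖w ^ (m + 1) / ∏ k ∈ Finset.range (m + 2), (z + (k : ℂ))‖) ∧
    Summable (fun m : ℕ =>
      ‖((m + 1 : ℕ) : ℂ) * z ^ m *
          ((Real.sin (((m + 1 : ℕ) : ℝ) * u / 2) / (((m + 1 : ℕ) : ℝ) * u / 2) : ℝ) : ℂ) /
        (((Real.sin (u / 2) / (u / 2) : ℝ) : ℂ) ^ (m + 1) *
          ∏ k ∈ Finset.Icc 1 (m + 1), (z + (k : ℂ)))‖) ∧
    (∑' m : ℕ,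
        ((m + 1 : ℕ) : ℂ) * z ^ m *
            ((Real.sin (((m + 1 : ℕ) : ℝ) * u / 2) / (((m + 1 : ℕ) : ℝ) * u / 2) : ℝ) : ℂ) /
          (((Real.sin (u / 2) / (u / 2) : ℝ) : ℂ) ^ (m + 1) *
            ∏ k ∈ Finset.Icc 1 (m + 1), (z + (k : ℂ)))
      = 1 / (Complex.I * (u : ℂ)) *
          (Gser z (Complex.I * z * (u : ℂ) / (1 - Complex.exp (-(Complex.I) * (u : ℂ))))
            - Gser z (-(Complex.I) * z * (u : ℂ) / (1 - Complex.exp (Complex.I * (u : ℂ)))))) := by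
  have hs : Real.sin (u / 2) ≠ 0 :=
    (Real.sin_pos_of_pos_of_lt_pi (by linarith) (by linarith)).ne'
  have hz0 : z ≠ 0 := by simpa using hz 0
  have hsum := hasSum_hodgeTerm hu.ne' hs hz0
  exact ⟨summable_norm_pow_succ_div_prod_range z, summable_norm_iff.mpr hsum.summable,
    hsum.tsum_eq⟩
end
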